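/- A ring R is a right H-ring if and only if for every simple right R-module S, every simple subfactor of E(S) is isomorphic to S. -/

import Mathlib

def IsCoKasch (R : Type*) [Ring R] (M : Type*) [AddCommGroup M] [Module R M] : Prop :=
  ∀ (K : Submodule R M) (S : Submodule R (M ⧸ K)), IsSimpleModule R S →
    ∃ f : M →ₗ[R] S, Function.Surjective f

/-- `E` together with the embedding `i : S →ₗ[R] E` is an injective hull of `S`:
`E` is injective and `i` is an essential monomorphism. -/
def IsInjectiveHull (R : Type*) [Ring R] {S E : Type*} [AddCommGroup S] [Module R S]
    [AddCommGroup E] [Module R E] (i : S →ₗ[R] E) : Prop :=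
  Module.Injective R E ∧ Function.Injective i ∧
    ∀ N : Submodule R E, N ≠ ⊥ → N ⊓ LinearMap.range i ≠ ⊥

/-- `R` is a right `H`-ring: `Hom(E(S₁), E(S₂)) = 0` for all nonisomorphic
simple modules `S₁`, `S₂`. -/
def IsHRing (R : Type u) [Ring R] : Prop :=
  ∀ (S₁ S₂ E₁ E₂ : Type u) [AddCommGroup S₁] [Module R S₁] [AddCommGroup S₂] [Module R S₂]
    [AddCommGroup E₁] [Module R E₁] [AddCommGroup E₂] [Module R E₂],
    IsSimpleModule R S₁ → IsSimpleModule R S₂ → IsEmpty (S₁ ≃ₗ[R] S₂) →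
    ∀ (i₁ : S₁ →ₗ[R] E₁) (i₂ : S₂ →ₗ[R] E₂),
      IsInjectiveHull R i₁ → IsInjectiveHull R i₂ →
      ∀ f : E₁ →ₗ[R] E₂, f = 0

universe u v

/-!
If `f : E(S₁) → E(S₂)` is nonzero, its range meets the simple essential submodule `S₂`, hence
contains it, and `S₂` becomes a simple submodule of `E(S₁) ⧸ ker f`. Conversely, a simple
subfactor `U` of `E(S)` embeds in `E(U)`, and injectivity of `E(U)` extends this to a nonzero map
`E(S) → E(U)`. Injective hulls exist because a maximal essential extension of a module inside an
injective module is a retract of it.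
-/

section Lattice

variable {α : Type*}

/-- In `Submodule R M`, `IsEssentialLE a b` says that `b` is an essential extension of `a`. -/
def IsEssentialLE [Lattice α] [OrderBot α] (a b : α) : Prop :=
  a ≤ b ∧ ∀ c ≤ b, Disjoint c a → c = ⊥

theorem IsEssentialLE.trans [Lattice α] [OrderBot α] {a b c : α} (hab : IsEssentialLE a b)
    (hbc : IsEssentialLE b c) : IsEssentialLE a c :=
  ⟨hab.1.trans hbc.1, fun d hd hda =>
    hbc.2 d hd <| disjoint_iff.2 <| hab.2 _ inf_le_right (hda.mono_left inf_le_left)⟩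

variable [CompleteLattice α] [IsCompactlyGenerated α]

theorem exists_maximal_isEssentialLE (a : α) : ∃ b, Maximal (IsEssentialLE a) b := by
  have chain_sSup : ∀ c ⊆ {b | IsEssentialLE a b}, IsChain (· ≤ ·) c → ∀ x ∈ c,
      IsEssentialLE a (sSup c) := by
    refine fun c hc hchain x hx => ⟨(hc hx).1.trans (le_sSup hx), fun d hd hda => ?_⟩
    rw [← inf_eq_left.2 hd, hchain.directedOn.inf_sSup_eq, iSup₂_eq_bot]
    exact fun e he => (hc he).2 _ inf_le_right (hda.mono_left inf_le_left)
  obtain ⟨b, -, hb⟩ := zorn_le_nonempty₀ {b | IsEssentialLE a b}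
    (fun c hc hchain x hx => ⟨sSup c, chain_sSup c hc hchain x hx, fun _ => le_sSup⟩) a
    ⟨le_rfl, fun c hc hca => disjoint_self.1 (hca.mono_right hc)⟩
  exact ⟨b, hb⟩

theorem exists_maximal_disjoint (a : α) : ∃ c, Maximal (Disjoint · a) c := by
  obtain ⟨c, -, hc⟩ := zorn_le_nonempty₀ {c | Disjoint c a}
    (fun s hs hchain _ hx => ⟨sSup s, (hchain.directedOn.disjoint_sSup_left).2 hs,
      fun _ => le_sSup⟩) ⊥ disjoint_bot_left
  exact ⟨c, hc⟩

end Lattice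

open Submodule LinearMap

section Modules

variable {R : Type*} [Ring R] {M N : Type*} [AddCommGroup M] [Module R M]
  [AddCommGroup N] [Module R N]

theorem IsEssentialLE.map {f : M →ₗ[R] N} (hf : Function.Injective f) {p q : Submodule R M}
    (h : IsEssentialLE p q) : IsEssentialLE (p.map f) (q.map f) := by
  refine ⟨map_mono h.1, fun W hW hWp => ?_⟩
  have hcomap_le : W.comap f ≤ q := fun x hx => by
    obtain ⟨y, hy, hyx⟩ := hW hx
    exact hf hyx ▸ hy
  have hcomap_disjoint : Disjoint (W.comap f) p := by
    refine disjoint_def.2 fun x hxW hxp => hf ?_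
    rw [map_zero]
    exact disjoint_def.1 hWp _ hxW (mem_map_of_mem hxp)
  have hcomap_bot := h.2 _ hcomap_le hcomap_disjoint
  refine eq_bot_iff.2 fun w hw => ?_
  obtain ⟨x, -, rfl⟩ := hW hw
  have hx : x ∈ W.comap f := hw
  rw [hcomap_bot, mem_bot] at hx
  rw [hx, map_zero, mem_bot]

theorem isEssentialLE_map_mkQ_of_maximal_disjoint {C E : Submodule R M}
    (hC : Maximal (Disjoint · E) C) : IsEssentialLE (E.map C.mkQ) ⊤ := by
  refine ⟨le_top, fun W _ hWE => ?_⟩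
  have hC_le : C ≤ W.comap C.mkQ := fun x hx => by
    simp [(Quotient.mk_eq_zero C).2 hx]
  have hdisjoint : Disjoint (W.comap C.mkQ) E := by
    refine disjoint_def.2 fun x hxW hxE => disjoint_def.1 hC.1 x ?_ hxE
    rw [← Quotient.mk_eq_zero]
    exact disjoint_def.1 hWE _ hxW (mem_map_of_mem hxE)
  rw [← map_comap_eq_of_surjective C.mkQ_surjective W, le_antisymm (hC.2 hdisjoint hC_le) hC_le,
    mkQ_map_self]

end Modules

section Injective

variable {R : Type*} [Ring R] {Q : Type v} [AddCommGroup Q] [Module R Q]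

theorem Module.Injective.of_leftInverse [Module.Injective R Q] {E : Type v} [AddCommGroup E]
    [Module R E] (s : E →ₗ[R] Q) (r : Q →ₗ[R] E) (h : Function.LeftInverse r s) :
    Module.Injective R E where
  out _ _ _ _ _ _ f hf g := by
    obtain ⟨k, hk⟩ := Module.Injective.out f hf (s ∘ₗ g)
    exact ⟨r ∘ₗ k, fun x => by simp [hk, h (g x)]⟩

/-- With `C` maximal disjoint from `E`, the inclusion `E → Q` extends along `E ↪ Q ⧸ C` to an
injective `g`, whose range is an essential extension of `M` containing `E`, hence equal to `E`;
so `g ∘ mkQ` retracts `Q` onto `E`. -/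
theorem Submodule.injective_of_maximal_isEssentialLE [Module.Injective R Q]
    {M E : Submodule R Q} (hE : Maximal (IsEssentialLE M) E) : Module.Injective R E := by
  obtain ⟨C, hC⟩ := exists_maximal_disjoint E
  let ψ : E →ₗ[R] Q ⧸ C := C.mkQ ∘ₗ E.subtype
  have hψ_range : range ψ = E.map C.mkQ := by rw [range_comp, range_subtype]
  have hψ_inj : Function.Injective ψ := by
    rw [← ker_eq_bot, ker_comp, ker_mkQ, ← disjoint_iff_comap_eq_bot]
    exact hC.1.symm
  obtain ⟨g, hg⟩ := Module.Injective.out ψ hψ_inj E.subtype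
  have hess : IsEssentialLE (range ψ) ⊤ := hψ_range ▸ isEssentialLE_map_mkQ_of_maximal_disjoint hC
  have hg_inj : Function.Injective g := by
    refine ker_eq_bot.1 (hess.2 _ le_top (disjoint_def.2 ?_))
    rintro _ hx ⟨e, rfl⟩
    rw [mem_ker, hg, subtype_apply, ZeroMemClass.coe_eq_zero] at hx
    rw [hx, map_zero]
  have hE_range : IsEssentialLE E (range g) := by
    have hgψ : (range ψ).map g = E := by
      rw [← range_comp, show g ∘ₗ ψ = E.subtype from LinearMap.ext hg, range_subtype]
    simpa [hgψ] using hess.map hg_inj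
  have hrange : range g = E :=
    le_antisymm (hE.2 (hE.1.trans hE_range) hE_range.1) hE_range.1
  let r : Q →ₗ[R] E := (g ∘ₗ C.mkQ).codRestrict E fun q => hrange ▸ mem_range_self g _
  exact Module.Injective.of_leftInverse E.subtype r fun e => Subtype.ext (hg e)

end Injective

section InjectiveHull

variable (R : Type u) [Ring R]

theorem Module.exists_injective_embedding (M : Type u) [AddCommGroup M] [Module R M] :
    ∃ (Q : Type u) (_ : AddCommGroup Q) (_ : Module R Q),
      Module.Injective R Q ∧ ∃ j : M →ₗ[R] Q, Function.Injective j := by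
  let X := ModuleCat.of R M
  let J := CategoryTheory.Injective.under X
  refine ⟨J, inferInstance, inferInstance, Module.injective_module_of_injective_object R J
    (inj := inferInstanceAs (CategoryTheory.Injective J)),
    (CategoryTheory.Injective.ι X).hom, ?_⟩
  exact (ModuleCat.mono_iff_injective _).1 inferInstance

variable {R}

theorem isInjectiveHull_iff {S E : Type*} [AddCommGroup S] [Module R S] [AddCommGroup E]
    [Module R E] (i : S →ₗ[R] E) :
    IsInjectiveHull R i ↔
      Module.Injective R E ∧ Function.Injective i ∧ IsEssentialLE (range i) ⊤ := by
  simp only [IsInjectiveHull, IsEssentialLE, le_top, true_and, disjoint_iff, forall_const]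
  exact and_congr_right' <| and_congr_right' <| forall_congr' fun _ => not_imp_not

variable (R)

theorem exists_isInjectiveHull (M : Type u) [AddCommGroup M] [Module R M] :
    ∃ (E : Type u) (_ : AddCommGroup E) (_ : Module R E) (i : M →ₗ[R] E),
      IsInjectiveHull R i := by
  obtain ⟨Q, _, _, hQ, j, hj⟩ := Module.exists_injective_embedding R M
  obtain ⟨E, hE⟩ := exists_maximal_isEssentialLE (range j)
  let i : M →ₗ[R] E := j.codRestrict E fun m => hE.1.1 (mem_range_self j m)
  have hi_range : (range i).map E.subtype = range j := by
    rw [← range_comp, subtype_comp_codRestrict]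
  refine ⟨E, inferInstance, inferInstance, i, (isInjectiveHull_iff i).2
    ⟨injective_of_maximal_isEssentialLE hE, fun _ _ h => hj (congrArg Subtype.val h), le_top,
      fun N _ hN => ?_⟩⟩
  have hN_map := hE.1.2 (N.map E.subtype) (map_subtype_le E N)
    (hi_range ▸ disjoint_map E.injective_subtype hN)
  exact map_injective_of_injective E.injective_subtype (hN_map.trans (Submodule.map_bot _).symm)

end InjectiveHull

section Subfactors

variable {R : Type*} [Ring R] {E Q : Type v} [AddCommGroup E] [Module R E]
  [AddCommGroup Q] [Module R Q]

theorem exists_ne_zero_of_subfactor [Module.Injective R Q] (K : Submodule R E)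
    (U : Submodule R (E ⧸ K)) (φ : U →ₗ[R] Q) (hφ : φ ≠ 0) : ∃ f : E →ₗ[R] Q, f ≠ 0 := by
  let V := U.comap K.mkQ
  let ρ : V →ₗ[R] U := K.mkQ.restrict fun _ hx => hx
  have hρ : Function.Surjective ρ := by
    rintro ⟨u, hu⟩
    obtain ⟨x, rfl⟩ := K.mkQ_surjective u
    exact ⟨⟨x, hu⟩, rfl⟩
  obtain ⟨f, hf⟩ := Module.Injective.out V.subtype V.injective_subtype (φ ∘ₗ ρ)
  refine ⟨f, fun hf0 => hφ ?_⟩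
  rw [← cancel_right hρ, zero_comp, ← show f ∘ₗ V.subtype = φ ∘ₗ ρ from LinearMap.ext hf, hf0,
    zero_comp]

theorem exists_subfactor_equiv_of_le_range (f : E →ₗ[R] Q) {P : Submodule R Q}
    (hP : P ≤ range f) : ∃ U : Submodule R (E ⧸ ker f), Nonempty (U ≃ₗ[R] P) := by
  let φ := (ker f).liftQ f le_rfl
  have hφ : Function.Injective φ := ker_eq_bot.1 (ker_liftQ_eq_bot _ _ _ le_rfl)
  have hmap : (P.comap φ).map φ = P := by
    rw [map_comap_eq, range_liftQ, inf_eq_right.2 hP]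
  exact ⟨P.comap φ, ⟨(equivMapOfInjective φ hφ _).trans (LinearEquiv.ofEq _ _ hmap)⟩⟩

theorem exists_subfactor_equiv_of_ne_zero {S : Type*} [AddCommGroup S] [Module R S]
    [IsSimpleModule R S] {i : S →ₗ[R] Q} (hi : Function.Injective i)
    (hess : IsEssentialLE (range i) ⊤) {f : E →ₗ[R] Q} (hf : f ≠ 0) :
    ∃ U : Submodule R (E ⧸ ker f), Nonempty (U ≃ₗ[R] S) := by
  have hatom : IsAtom (range i) :=
    isSimpleModule_iff_isAtom.1 (IsSimpleModule.congr (LinearEquiv.ofInjective i hi).symm)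
  have hle : range i ≤ range f :=
    hatom.not_disjoint_iff_le.1 fun h => hf (range_eq_bot.1 (hess.2 _ le_top h.symm))
  obtain ⟨U, ⟨e⟩⟩ := exists_subfactor_equiv_of_le_range f hle
  exact ⟨U, ⟨e.trans (LinearEquiv.ofInjective i hi).symm⟩⟩

end Subfactors

/-- `R` is a right H-ring iff for every simple module `S` and every
injective hull `E` of `S`, every simple subfactor of `E` is isomorphic to `S`. -/
theorem stmt18 (R : Type u) [Ring R] :
    IsHRing R ↔
      ∀ (S E : Type u) [AddCommGroup S] [Module R S] [AddCommGroup E] [Module R E],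
        IsSimpleModule R S → ∀ i : S →ₗ[R] E, IsInjectiveHull R i →
          ∀ (K : Submodule R E) (U : Submodule R (E ⧸ K)), IsSimpleModule R U →
            Nonempty (U ≃ₗ[R] S) := by
  constructor
  · intro hH S E _ _ _ _ hS i hi K U hU
    obtain ⟨E₂, _, _, i₂, hi₂⟩ := exists_isInjectiveHull R U
    have := hi₂.1
    have : Nontrivial U := IsSimpleModule.nontrivial R U
    by_contra hUS
    obtain ⟨f, hf⟩ := exists_ne_zero_of_subfactor K U i₂ (ne_zero_of_injective hi₂.2.1)
    exact hf (hH S U E E₂ hS hU ⟨fun e => hUS ⟨e.symm⟩⟩ i i₂ hi hi₂ f)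
  · intro h S₁ S₂ E₁ E₂ _ _ _ _ _ _ _ _ hS₁ hS₂ hS₁₂ i₁ i₂ hi₁ hi₂ f
    by_contra hf
    obtain ⟨-, hi₂_inj, hi₂_ess⟩ := (isInjectiveHull_iff i₂).1 hi₂
    obtain ⟨U, ⟨e⟩⟩ := exists_subfactor_equiv_of_ne_zero hi₂_inj hi₂_ess hf
    obtain ⟨e'⟩ := h S₁ E₁ hS₁ i₁ hi₁ _ U (IsSimpleModule.congr e)
    exact hS₁₂.false (e'.symm.trans e)
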